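/- Soundness of diamond introduction: if Γ ⊩ φ^v and Γ ⊩ xRv hold validly, then Γ ⊩ (◇φ)^x. -/
import Mathlib


/-- Labels -/
abbrev Lbl := ℕ
/-- Propositional atoms -/
abbrev Atm := ℕ

/-- A basic sentence: a labelled atom `p^x` or a relational assumption `xRy`. -/
inductive BSent where
  | atom : Atm → Lbl → BSent
  | rel : Lbl → Lbl → BSent
deriving DecidableEq

/-- A basic sequent `(P ⇒ p)`. -/
abbrev BSeq := List BSent × BSent

/-- A basic rule `((P₁ ⇒ p₁, …, Pₙ ⇒ pₙ) ⇒ r)`. -/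
abbrev BRule := List BSeq × BSent

/-- A base is a set of basic rules. -/
abbrev Base := Set BRule

/-- Basic derivability `S ⊢_B p`, generated by (Ref) and (App). -/
inductive Der (B : Base) : Set BSent → BSent → Prop where
  | ref {S : Set BSent} {s : BSent} : s ∈ S → Der B S s
  | app {S : Set BSent} {r : BSent} {Ps : List BSeq} :
      (Ps, r) ∈ B →
      (∀ q ∈ Ps, Der B (S ∪ {a | a ∈ q.1}) q.2) →
      Der B S r
/-- Frame conditions. -/
inductive FrameCond where
  | d | t | b | four | five | two
deriving DecidableEq

/-- Labels occurring in a basic sentence. -/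
def BSent.labels : BSent → Set Lbl
  | .atom _ x => {x}
  | .rel x y => {x, y}

/-- Basic derivability `S ⊢_B^γ p` with the modal cases for the frame conditions γ. -/
inductive DerM (γ : Set FrameCond) (B : Base) : Set BSent → BSent → Prop where
  | ref {S : Set BSent} {s : BSent} : s ∈ S → DerM γ B S s
  | app {S : Set BSent} {r : BSent} {Ps : List BSeq} :
      (Ps, r) ∈ B →
      (∀ q ∈ Ps, DerM γ B (S ∪ {a | a ∈ q.1}) q.2) →
      DerM γ B S r
  | dCase {S : Set BSent} {x y : Lbl} {p : Atm} {z : Lbl} : FrameCond.d ∈ γ →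
      (∀ s ∈ S, y ∉ s.labels) → y ≠ x → y ≠ z →
      DerM γ B (insert (.rel x y) S) (.atom p z) → DerM γ B S (.atom p z)
  | tCase {S : Set BSent} {x : Lbl} {p : Atm} {y : Lbl} : FrameCond.t ∈ γ →
      DerM γ B (insert (.rel x x) S) (.atom p y) → DerM γ B S (.atom p y)
  | bCase {S : Set BSent} {x y : Lbl} {p : Atm} {z : Lbl} : FrameCond.b ∈ γ →
      DerM γ B S (.rel x y) →
      DerM γ B (insert (.rel y x) S) (.atom p z) → DerM γ B S (.atom p z)
  | fourCase {S : Set BSent} {x y z : Lbl} {p : Atm} {w : Lbl} : FrameCond.four ∈ γ →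
      DerM γ B S (.rel x y) → DerM γ B S (.rel y z) →
      DerM γ B (insert (.rel x z) S) (.atom p w) → DerM γ B S (.atom p w)
  | fiveCase {S : Set BSent} {x y z : Lbl} {p : Atm} {w : Lbl} : FrameCond.five ∈ γ →
      DerM γ B S (.rel x y) → DerM γ B S (.rel x z) →
      DerM γ B (insert (.rel y z) S) (.atom p w) → DerM γ B S (.atom p w)
  | twoCase {S : Set BSent} {x y z w : Lbl} {p : Atm} {v : Lbl} : FrameCond.two ∈ γ →
      DerM γ B S (.rel x y) → DerM γ B S (.rel x z) →
      (∀ s ∈ S, w ∉ s.labels) → w ≠ x → w ≠ y → w ≠ z → w ≠ v →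
      DerM γ B (insert (.rel y w) (insert (.rel z w) S)) (.atom p v) →
      DerM γ B S (.atom p v)

/-- Propositional modal formulae. -/
inductive Formula where
  | atom : Atm → Formula
  | top : Formula
  | bot : Formula
  | and : Formula → Formula → Formula
  | or : Formula → Formula → Formula
  | imp : Formula → Formula → Formula
  | box : Formula → Formula
  | dia : Formula → Formula
deriving DecidableEq

/-- The support relation `⊩_B^γ φ^x` of the base-extension semantics. -/
def Spt (γ : Set FrameCond) : Formula → Base → Lbl → Prop
  | .atom p, B, x => DerM γ B ∅ (.atom p x)
  | .top, _, _ => True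
  | .bot, B, _ => ∀ p z, DerM γ B ∅ (.atom p z)
  | .and φ ψ, B, x => Spt γ φ B x ∧ Spt γ ψ B x
  | .or φ ψ, B, x => ∀ C, B ⊆ C → ∀ (p : Atm) (z : Lbl),
      (∀ D, C ⊆ D → Spt γ φ D x → DerM γ D ∅ (.atom p z)) →
      (∀ D, C ⊆ D → Spt γ ψ D x → DerM γ D ∅ (.atom p z)) →
      DerM γ C ∅ (.atom p z)
  | .imp φ ψ, B, x => ∀ C, B ⊆ C → Spt γ φ C x → Spt γ ψ C x
  | .box φ, B, x => ∀ (y : Lbl), ∀ C, B ⊆ C → DerM γ C ∅ (.rel x y) → Spt γ φ C y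
  | .dia φ, B, x => ∀ C, B ⊆ C → ∀ (p : Atm) (z : Lbl),
      (∀ (y : Lbl), ∀ D, C ⊆ D → DerM γ D ∅ (.rel x y) → Spt γ φ D y →
        DerM γ D ∅ (.atom p z)) →
      DerM γ C ∅ (.atom p z)

/-- Extended formulae: labelled formulae or relational assumptions. -/
inductive EForm where
  | f : Formula → Lbl → EForm
  | rel : Lbl → Lbl → EForm
deriving DecidableEq

/-- Support for extended formulae. -/
def SupE (γ : Set FrameCond) (B : Base) : EForm → Prop
  | .f φ x => Spt γ φ B x
  | .rel x y => DerM γ B ∅ (.rel x y)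

/-- Support for extended sequents `Γ ⊩_B^γ e`: the (Inf) clause. -/
def SupSeq (γ : Set FrameCond) (B : Base) (Γ : Set EForm) (e : EForm) : Prop :=
  (Γ = ∅ → SupE γ B e) ∧
  (Γ ≠ ∅ → ∀ C, B ⊆ C → (∀ ψ ∈ Γ, SupE γ C ψ) → SupE γ C e)

/-- Validity of a sequent: support in every base. -/
def Valid (γ : Set FrameCond) (Γ : Set EForm) (e : EForm) : Prop :=
  ∀ B : Base, SupSeq γ B Γ e

/-- Labels occurring in an extended formula. -/
def EForm.labels : EForm → Set Lbl
  | .f _ x => {x}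
  | .rel x y => {x, y}

/-- Simpson's labelled natural deduction system N_□◇(γ). -/
inductive ND (γ : Set FrameCond) : Set EForm → Formula → Lbl → Prop where
  | hyp {Γ φ x} : EForm.f φ x ∈ Γ → ND γ Γ φ x
  | topI {Γ x} : ND γ Γ .top x
  | botE {Γ x φ y} : ND γ Γ .bot x → ND γ Γ φ y
  | andI {Γ φ ψ x} : ND γ Γ φ x → ND γ Γ ψ x → ND γ Γ (Formula.and φ ψ) x
  | andE1 {Γ φ ψ x} : ND γ Γ (Formula.and φ ψ) x → ND γ Γ φ x
  | andE2 {Γ φ ψ x} : ND γ Γ (Formula.and φ ψ) x → ND γ Γ ψ x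
  | orI1 {Γ φ ψ x} : ND γ Γ φ x → ND γ Γ (Formula.or φ ψ) x
  | orI2 {Γ φ ψ x} : ND γ Γ ψ x → ND γ Γ (Formula.or φ ψ) x
  | orE {Γ φ ψ χ x y} : ND γ Γ (Formula.or φ ψ) x → ND γ (insert (.f φ x) Γ) χ y →
      ND γ (insert (.f ψ x) Γ) χ y → ND γ Γ χ y
  | impI {Γ φ ψ x} : ND γ (insert (.f φ x) Γ) ψ x → ND γ Γ (Formula.imp φ ψ) x
  | impE {Γ φ ψ x} : ND γ Γ (Formula.imp φ ψ) x → ND γ Γ φ x → ND γ Γ ψ x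
  | boxI {Γ φ x y} : y ≠ x → (∀ e ∈ Γ, y ∉ e.labels) →
      ND γ (insert (.rel x y) Γ) φ y → ND γ Γ (Formula.box φ) x
  | boxE {Γ φ x y} : ND γ Γ (Formula.box φ) x → EForm.rel x y ∈ Γ → ND γ Γ φ y
  | diaI {Γ φ x y} : ND γ Γ φ y → EForm.rel x y ∈ Γ → ND γ Γ (Formula.dia φ) x
  | diaE {Γ φ ψ x y z} : ND γ Γ (Formula.dia φ) x → y ≠ x → y ≠ z → (∀ e ∈ Γ, y ∉ e.labels) →
      ND γ (insert (.f φ y) (insert (.rel x y) Γ)) ψ z → ND γ Γ ψ z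
  | rD {Γ φ x y z} : FrameCond.d ∈ γ → y ≠ x → y ≠ z → (∀ e ∈ Γ, y ∉ e.labels) →
      ND γ (insert (.rel x y) Γ) φ z → ND γ Γ φ z
  | rT {Γ φ x y} : FrameCond.t ∈ γ → ND γ (insert (.rel x x) Γ) φ y → ND γ Γ φ y
  | rB {Γ φ x y z} : FrameCond.b ∈ γ → EForm.rel x y ∈ Γ →
      ND γ (insert (.rel y x) Γ) φ z → ND γ Γ φ z
  | r4 {Γ φ x y z w} : FrameCond.four ∈ γ → EForm.rel x y ∈ Γ → EForm.rel y z ∈ Γ →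
      ND γ (insert (.rel x z) Γ) φ w → ND γ Γ φ w
  | r5 {Γ φ x y z w} : FrameCond.five ∈ γ → EForm.rel x y ∈ Γ → EForm.rel x z ∈ Γ →
      ND γ (insert (.rel y z) Γ) φ w → ND γ Γ φ w
  | r2 {Γ φ x y z w v} : FrameCond.two ∈ γ → EForm.rel x y ∈ Γ → EForm.rel x z ∈ Γ →
      w ≠ x → w ≠ y → w ≠ z → w ≠ v → (∀ e ∈ Γ, w ∉ e.labels) →
      ND γ (insert (.rel y w) (insert (.rel z w) Γ)) φ v → ND γ Γ φ v

lemma derm_mono {γ : Set FrameCond} {B B' : Base} (hBB : B ⊆ B') {S : Set BSent} {s : BSent}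
    (h : DerM γ B S s) : DerM γ B' S s := by
  induction h with
  | ref hs => exact .ref hs
  | app hr _ ih => exact .app (hBB hr) ih
  | dCase hγ hfresh hne1 hne2 _ ih => exact .dCase hγ hfresh hne1 hne2 ih
  | tCase hγ _ ih => exact .tCase hγ ih
  | bCase hγ _ _ ih1 ih2 => exact .bCase hγ ih1 ih2
  | fourCase hγ _ _ _ ih1 ih2 ih3 => exact .fourCase hγ ih1 ih2 ih3
  | fiveCase hγ _ _ _ ih1 ih2 ih3 => exact .fiveCase hγ ih1 ih2 ih3
  | twoCase hγ _ _ hf h1 h2 h3 h4 _ ih1 ih2 ih3 =>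
      exact .twoCase hγ ih1 ih2 hf h1 h2 h3 h4 ih3

lemma spt_mono {γ : Set FrameCond} (φ : Formula) {B B' : Base} (hBB : B ⊆ B') {x : Lbl}
    (h : Spt γ φ B x) : Spt γ φ B' x := by
  induction φ generalizing B B' x with
  | atom p => exact derm_mono hBB h
  | top => trivial
  | bot => exact fun p z => derm_mono hBB (h p z)
  | and φ ψ ihφ ihψ => exact ⟨ihφ hBB h.1, ihψ hBB h.2⟩
  | or φ ψ _ _ => exact fun C hC => h C (hBB.trans hC)
  | imp φ ψ _ _ => exact fun C hC => h C (hBB.trans hC)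
  | box φ _ => exact fun y C hC => h y C (hBB.trans hC)
  | dia φ _ => exact fun C hC => h C (hBB.trans hC)

lemma supE_mono {γ : Set FrameCond} {B B' : Base} (hBB : B ⊆ B') {e : EForm}
    (h : SupE γ B e) : SupE γ B' e := by
  cases e with
  | f φ x => exact spt_mono φ hBB h
  | rel x y => exact derm_mono hBB h

/-- Soundness of diamond introduction. -/
theorem dia_intro_sound (γ : Set FrameCond) (Γ : Set EForm) (φ : Formula) (x v : Lbl)
    (h1 : Valid γ Γ (.f φ v)) (h2 : Valid γ Γ (.rel x v)) :
    Valid γ Γ (.f (Formula.dia φ) x) := by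
  intro B
  constructor
  · intro hΓ C hBC p z h
    exact h v C (subset_refl C) ((h2 C).1 hΓ) ((h1 C).1 hΓ)
  · intro hΓ C hBC hsup C' hCC' p z h
    have hsup' : ∀ ψ ∈ Γ, SupE γ C' ψ := fun ψ hψ => supE_mono hCC' (hsup ψ hψ)
    exact h v C' (subset_refl C') ((h2 C').2 hΓ C' (subset_refl C') hsup')
      ((h1 C').2 hΓ C' (subset_refl C') hsup')
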